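/- Let g : ℝ → ℝ be nonnegative and nondecreasing on the interval [0, 3π/2]. Then ∫₀^{3π/2} g(u) cos(u) du ≤ 0. -/
import Mathlib


open Real MeasureTheory

theorem integral_mul_cos_nonpos_of_monotoneOn (g : ℝ → ℝ)
    (hnonneg : ∀ u ∈ Set.Icc (0:ℝ) (3 * π / 2), 0 ≤ g u)
    (hmono : MonotoneOn g (Set.Icc (0:ℝ) (3 * π / 2))) :
    (∫ u in (0:ℝ)..(3 * π / 2), g u * Real.cos u) ≤ 0 := by
  have hpi : (0:ℝ) < π := Real.pi_pos
  have hle : (0:ℝ) ≤ 3 * π / 2 := by linarith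
  have hmem : π / 2 ∈ Set.Icc (0:ℝ) (3 * π / 2) := by
    constructor <;> linarith
  -- integrability of g * cos
  have hgint : IntervalIntegrable g volume 0 (3 * π / 2) := by
    apply MonotoneOn.intervalIntegrable
    rwa [Set.uIcc_of_le hle]
  have hint : IntervalIntegrable (fun u => g u * Real.cos u) volume 0 (3 * π / 2) :=
    hgint.mul_continuousOn Real.continuousOn_cos
  have hint2 : IntervalIntegrable (fun u => g (π / 2) * Real.cos u) volume 0 (3 * π / 2) :=
    (continuous_const.mul Real.continuous_cos).intervalIntegrable _ _
  -- pointwise bound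
  have hpt : ∀ u ∈ Set.Icc (0:ℝ) (3 * π / 2),
      g u * Real.cos u ≤ g (π / 2) * Real.cos u := by
    intro u hu
    obtain ⟨hu0, hu1⟩ := hu
    rcases le_or_gt u (π / 2) with h | h
    · have hcos : 0 ≤ Real.cos u := Real.cos_nonneg_of_mem_Icc ⟨by linarith, h⟩
      have := hmono ⟨hu0, hu1⟩ hmem h
      exact mul_le_mul_of_nonneg_right this hcos
    · have hcos : Real.cos u ≤ 0 :=
        Real.cos_nonpos_of_pi_div_two_le_of_le h.le (by linarith)
      have := hmono hmem ⟨hu0, hu1⟩ h.le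
      exact mul_le_mul_of_nonpos_right this hcos
  have hineq := intervalIntegral.integral_mono_on hle hint hint2 hpt
  have hsin : Real.sin (3 * π / 2) = -1 := by
    rw [show (3 * π / 2 : ℝ) = π + π / 2 by ring, Real.sin_add]
    simp
  have hval : (∫ u in (0:ℝ)..(3 * π / 2), g (π / 2) * Real.cos u) = - g (π / 2) := by
    rw [intervalIntegral.integral_const_mul, integral_cos, hsin]
    simp
  have hg0 : 0 ≤ g (π / 2) := hnonneg _ hmem
  calc (∫ u in (0:ℝ)..(3 * π / 2), g u * Real.cos u)
      ≤ - g (π / 2) := by rw [← hval]; exact hineq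
    _ ≤ 0 := by linarith
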